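/- For D > 1, the family of functions Û_{x₀,λ}(s,t) = 2 log( λ(x² + (y+1)²) / ((x - x₀)² + (y + Dλ)² - λ²) ), where (x,y) = I⁻¹(s,t) = (2s/(s² + (t+1)²), (1 - s² - t²)/(s² + (t+1)²)), solves -Δ Û = -2 e^{Û} in the open unit disk B² and ∂_ν Û + 2 = 2D e^{Û/2} on S¹. -/

import Mathlib

open Real Finset

/-- Euclidean Laplacian on the plane: sum of second derivatives in coordinate directions. -/
noncomputable def lap (f : EuclideanSpace ℝ (Fin 2) → ℝ) (x : EuclideanSpace ℝ (Fin 2)) : ℝ :=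
  ∑ i : Fin 2, fderiv ℝ (fun y => fderiv ℝ f y (EuclideanSpace.single i 1)) x
    (EuclideanSpace.single i 1)

/-- First component of the inverse Riemann map `(x,y) = I⁻¹(s,t)`. -/
noncomputable def Xc (p : EuclideanSpace ℝ (Fin 2)) : ℝ :=
  2 * p 0 / (p 0 ^ 2 + (p 1 + 1) ^ 2)

/-- Second component of the inverse Riemann map `(x,y) = I⁻¹(s,t)`. -/
noncomputable def Yc (p : EuclideanSpace ℝ (Fin 2)) : ℝ :=
  (1 - p 0 ^ 2 - p 1 ^ 2) / (p 0 ^ 2 + (p 1 + 1) ^ 2)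

/-- The bubble on the disk:
`Û(s,t) = 2 log(λ(x² + (y+1)²)/((x-x₀)² + (y+Dλ)² - λ²))` with `(x,y) = I⁻¹(s,t)`. -/
noncomputable def diskBubble (D l x₀ : ℝ) (p : EuclideanSpace ℝ (Fin 2)) : ℝ :=
  2 * Real.log (l * (Xc p ^ 2 + (Yc p + 1) ^ 2) /
    ((Xc p - x₀) ^ 2 + (Yc p + D * l) ^ 2 - l ^ 2))

/-!
The inverse Riemann map `I⁻¹` is a Möbius transformation, so it pulls the circle
`(x - x₀)² + (y + Dλ)² = λ²` back to the zero set of a quadric `R p = a‖p‖² + ⟪b, p⟫ + e`.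
Since `I⁻¹` has conformal factor `x² + (y + 1)² = 4 / (s² + (t + 1)²)`, the factor
`s² + (t + 1)²` cancels and, after normalising `R`, `Û = -2 log R`. For every quadric in the
plane `Δ log R = (4ae - ‖b‖²) / R²`, and on the unit circle `∂_ν log R = 1 - (e - a) / R`.
For the bubble `4ae - ‖b‖² = -1` and `e - a = D`, which are exactly the interior equation
`-ΔÛ = -2 e^Û = -2 / R²` and the boundary condition `∂_ν Û + 2 = 2D / R = 2D e^{Û/2}`.
-/

open Filter Topology

section Quadric

variable {E : Type*} [NormedAddCommGroup E] [InnerProductSpace ℝ E]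

def quadric (a : ℝ) (b : E) (e : ℝ) (x : E) : ℝ := a * ‖x‖ ^ 2 + inner ℝ b x + e

variable (a : ℝ) (b : E) (e : ℝ)

theorem hasFDerivAt_quadric (x : E) :
    HasFDerivAt (quadric a b e) ((2 * a) • innerSL ℝ x + innerSL ℝ b) x := by
  have h := (((hasStrictFDerivAt_norm_sq x).hasFDerivAt.const_mul a).add
    (innerSL ℝ b).hasFDerivAt).add_const e
  refine h.congr_fderiv (ContinuousLinearMap.ext fun v => ?_)
  simp only [add_apply, smul_apply, coe_innerSL_apply, nsmul_eq_mul, Nat.cast_ofNat, smul_eq_mul]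
  ring

theorem continuous_quadric : Continuous (quadric a b e) := by
  unfold quadric; fun_prop

theorem fderiv_log_quadric_apply {x : E} (hx : quadric a b e x ≠ 0) (v : E) :
    fderiv ℝ (fun y => log (quadric a b e y)) x v
      = (2 * a * inner ℝ x v + inner ℝ b v) / quadric a b e x := by
  rw [((hasFDerivAt_quadric a b e x).log hx).fderiv]
  simp only [smul_apply, add_apply, innerSL_apply_apply, smul_eq_mul]
  field_simp

theorem fderiv_log_quadric_apply_self_of_norm_eq_one {x : E} (hx : quadric a b e x ≠ 0)
    (hx1 : ‖x‖ = 1) :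
    fderiv ℝ (fun y => log (quadric a b e y)) x x = 1 - (e - a) / quadric a b e x := by
  rw [fderiv_log_quadric_apply a b e hx, real_inner_self_eq_norm_sq, hx1]
  field_simp
  rw [quadric, hx1]
  ring

theorem fderiv_fderiv_log_quadric_apply {x : E} (hx : quadric a b e x ≠ 0) (v : E) :
    fderiv ℝ (fun y => fderiv ℝ (fun z => log (quadric a b e z)) y v) x v
      = (2 * a * ‖v‖ ^ 2 * quadric a b e x - (2 * a * inner ℝ x v + inner ℝ b v) ^ 2)
        / quadric a b e x ^ 2 := by
  have hnear : ∀ᶠ y in 𝓝 x, quadric a b e y ≠ 0 :=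
    (continuous_quadric a b e).continuousAt.eventually_ne hx
  have heq : (fun y => fderiv ℝ (fun z => log (quadric a b e z)) y v)
      =ᶠ[𝓝 x] fun y => (quadric a b e y)⁻¹ * (2 * a * inner ℝ y v + inner ℝ b v) :=
    hnear.mono fun y hy => (fderiv_log_quadric_apply a b e hy v).trans (div_eq_inv_mul _ _)
  have hnum : HasFDerivAt (fun y => 2 * a * inner ℝ y v + inner ℝ b v)
      ((2 * a) • innerSL ℝ v) x := by
    have h := ((innerSL ℝ v).hasFDerivAt (x := x)).const_mul (2 * a) |>.add_const (inner ℝ b v)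
    simpa only [innerSL_apply_apply, real_inner_comm v] using h
  have hinv := (hasDerivAt_inv hx).comp_hasFDerivAt x (hasFDerivAt_quadric a b e x)
  have hprod : HasFDerivAt (fun y => (quadric a b e y)⁻¹ * (2 * a * inner ℝ y v + inner ℝ b v))
      _ x := hinv.mul hnum
  rw [heq.fderiv_eq, hprod.fderiv]
  simp only [add_apply, smul_apply, innerSL_apply_apply, smul_eq_mul, Function.comp_apply,
    real_inner_self_eq_norm_sq]
  field_simp
  ring

end Quadric

theorem fderiv_fun_const_mul {E : Type*} [NormedAddCommGroup E] [NormedSpace ℝ E] (c : ℝ)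
    (f : E → ℝ) : fderiv ℝ (fun y => c * f y) = c • fderiv ℝ f :=
  fderiv_const_smul_field c

section Laplacian

variable {f g : EuclideanSpace ℝ (Fin 2) → ℝ} {x : EuclideanSpace ℝ (Fin 2)}

theorem Filter.EventuallyEq.lap_eq (h : f =ᶠ[𝓝 x] g) : lap f x = lap g x := by
  unfold lap
  congr 1 with i
  have hdir : (fun y => fderiv ℝ f y (EuclideanSpace.single i 1))
      =ᶠ[𝓝 x] fun y => fderiv ℝ g y (EuclideanSpace.single i 1) :=
    (h.fderiv (𝕜 := ℝ)).mono fun y hy => congrArg (· (EuclideanSpace.single i 1)) hy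
  rw [hdir.fderiv_eq]

theorem lap_const_mul (c : ℝ) :
    lap (fun y => c * f y) x = c * lap f x := by
  simp only [lap, fderiv_fun_const_mul, Pi.smul_apply, smul_apply, smul_eq_mul, mul_sum]

theorem lap_log_quadric (a : ℝ) (b : EuclideanSpace ℝ (Fin 2)) (e : ℝ)
    (hx : quadric a b e x ≠ 0) :
    lap (fun y => log (quadric a b e y)) x = (4 * a * e - ‖b‖ ^ 2) / quadric a b e x ^ 2 := by
  simp only [lap, Fin.sum_univ_two, fderiv_fderiv_log_quadric_apply a b e hx]
  simp only [quadric, EuclideanSpace.real_norm_sq_eq, PiLp.norm_single, norm_one, PiLp.inner_apply,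
    Fin.sum_univ_two, RCLike.inner_apply, conj_trivial, PiLp.single_eq_same, ne_eq, one_ne_zero,
    zero_ne_one, not_false_eq_true, PiLp.single_eq_of_ne, one_pow, mul_one, one_mul,
    zero_mul, add_zero, zero_add]
  field_simp
  ring

end Laplacian

section Bubble

-- With `c = x₀² + (D² - 1)λ²` the coefficients are `a = (c + 1 - 2Dλ) / 4λ`,
-- `b = (-4x₀, 2(c - 1)) / 4λ` and `e = (c + 1 + 2Dλ) / 4λ`, so `4ae - ‖b‖² = -1`, `e - a = D`.
noncomputable def bubbleQuadric (D l x₀ : ℝ) : EuclideanSpace ℝ (Fin 2) → ℝ :=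
  quadric ((x₀ ^ 2 + (D * l - 1) ^ 2 - l ^ 2) / (4 * l))
    !₂[-x₀ / l, (x₀ ^ 2 + (D ^ 2 - 1) * l ^ 2 - 1) / (2 * l)]
    ((x₀ ^ 2 + (D * l + 1) ^ 2 - l ^ 2) / (4 * l))

variable {D l x₀ : ℝ} {p : EuclideanSpace ℝ (Fin 2)}

theorem sq_add_sq_eq_norm_sq (p : EuclideanSpace ℝ (Fin 2)) :
    p 0 ^ 2 + p 1 ^ 2 = ‖p‖ ^ 2 := by
  rw [EuclideanSpace.real_norm_sq_eq, Fin.sum_univ_two]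

theorem sq_add_add_one_sq_pos (hp : ‖p‖ < 1) : 0 < p 0 ^ 2 + (p 1 + 1) ^ 2 := by
  have hn := sq_add_sq_eq_norm_sq p
  have hp1 : -1 < p 1 := by nlinarith [norm_nonneg p, sq_nonneg (p 0)]
  nlinarith [sq_nonneg (p 0)]

theorem bubbleQuadric_apply (p : EuclideanSpace ℝ (Fin 2)) :
    bubbleQuadric D l x₀ p
      = (x₀ ^ 2 + (D * l - 1) ^ 2 - l ^ 2) / (4 * l) * (p 0 ^ 2 + p 1 ^ 2)
      + (-x₀ / l) * p 0 + (x₀ ^ 2 + (D ^ 2 - 1) * l ^ 2 - 1) / (2 * l) * p 1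
      + (x₀ ^ 2 + (D * l + 1) ^ 2 - l ^ 2) / (4 * l) := by
  simp only [bubbleQuadric, quadric, EuclideanSpace.real_norm_sq_eq, Fin.sum_univ_two,
    PiLp.inner_apply, RCLike.inner_apply, conj_trivial, Matrix.cons_val_zero, Matrix.cons_val_one,
    Matrix.cons_val_fin_one]
  ring

theorem diskBubble_eq_neg_two_mul_log (hl : l ≠ 0) (hd : p 0 ^ 2 + (p 1 + 1) ^ 2 ≠ 0) :
    diskBubble D l x₀ p = -2 * log (bubbleQuadric D l x₀ p) := by
  have hnum : Xc p ^ 2 + (Yc p + 1) ^ 2 = 4 / (p 0 ^ 2 + (p 1 + 1) ^ 2) := by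
    unfold Xc Yc
    field_simp
    ring
  have hden : (Xc p - x₀) ^ 2 + (Yc p + D * l) ^ 2 - l ^ 2
      = 4 * l * bubbleQuadric D l x₀ p / (p 0 ^ 2 + (p 1 + 1) ^ 2) := by
    rw [bubbleQuadric_apply]
    unfold Xc Yc
    field_simp
    ring
  have harg : l * (4 / (p 0 ^ 2 + (p 1 + 1) ^ 2))
      / (4 * l * bubbleQuadric D l x₀ p / (p 0 ^ 2 + (p 1 + 1) ^ 2))
      = (bubbleQuadric D l x₀ p)⁻¹ := by
    rw [mul_div_assoc', div_div_div_cancel_right₀ hd, mul_comm l 4,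
      div_mul_cancel_left₀ (by positivity)]
  rw [diskBubble, hnum, hden, harg, log_inv]
  ring

theorem exp_diskBubble (hl : l ≠ 0) (hd : p 0 ^ 2 + (p 1 + 1) ^ 2 ≠ 0)
    (hR : 0 < bubbleQuadric D l x₀ p) :
    exp (diskBubble D l x₀ p) = (bubbleQuadric D l x₀ p ^ 2)⁻¹ := by
  rw [diskBubble_eq_neg_two_mul_log hl hd, neg_mul, exp_neg, two_mul, exp_add, exp_log hR, sq]

theorem exp_half_diskBubble (hl : l ≠ 0) (hd : p 0 ^ 2 + (p 1 + 1) ^ 2 ≠ 0)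
    (hR : 0 < bubbleQuadric D l x₀ p) :
    exp (diskBubble D l x₀ p / 2) = (bubbleQuadric D l x₀ p)⁻¹ := by
  rw [diskBubble_eq_neg_two_mul_log hl hd, neg_mul, neg_div, mul_div_cancel_left₀ _ two_ne_zero,
    exp_neg, exp_log hR]

theorem bubbleQuadric_pos (hD : 1 < D) (hl : 0 < l) (hp : ‖p‖ ≤ 1)
    (hd : 0 < p 0 ^ 2 + (p 1 + 1) ^ 2) : 0 < bubbleQuadric D l x₀ p := by
  have hn : p 0 ^ 2 + p 1 ^ 2 ≤ 1 := by
    rw [sq_add_sq_eq_norm_sq]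
    nlinarith [norm_nonneg p]
  -- both sides equal `d² ((x - x₀)² + (y + Dλ)² - λ²)`, where `d = s² + (t + 1)²`
  have key : 4 * l * (p 0 ^ 2 + (p 1 + 1) ^ 2) * bubbleQuadric D l x₀ p
      = (2 * p 0 - x₀ * (p 0 ^ 2 + (p 1 + 1) ^ 2)) ^ 2 + (1 - (p 0 ^ 2 + p 1 ^ 2)) ^ 2
        + 2 * D * l * (p 0 ^ 2 + (p 1 + 1) ^ 2) * (1 - (p 0 ^ 2 + p 1 ^ 2))
        + (D ^ 2 - 1) * l ^ 2 * (p 0 ^ 2 + (p 1 + 1) ^ 2) ^ 2 := by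
    rw [bubbleQuadric_apply]
    field_simp
    ring
  have hD2 : 0 < D ^ 2 - 1 := by nlinarith
  have hrhs : 0 < 4 * l * (p 0 ^ 2 + (p 1 + 1) ^ 2) * bubbleQuadric D l x₀ p := by
    rw [key]
    have : 0 ≤ 1 - (p 0 ^ 2 + p 1 ^ 2) := by linarith
    positivity
  exact pos_of_mul_pos_right hrhs (by positivity)

theorem diskBubble_eventuallyEq (hl : l ≠ 0) (hd : p 0 ^ 2 + (p 1 + 1) ^ 2 ≠ 0) :
    diskBubble D l x₀ =ᶠ[𝓝 p] fun q => -2 * log (bubbleQuadric D l x₀ q) := by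
  have hcont : Continuous fun q : EuclideanSpace ℝ (Fin 2) => q 0 ^ 2 + (q 1 + 1) ^ 2 := by
    fun_prop
  exact (hcont.continuousAt.eventually_ne hd).mono fun q hq => diskBubble_eq_neg_two_mul_log hl hq

theorem lap_diskBubble (hl : l ≠ 0) (hd : p 0 ^ 2 + (p 1 + 1) ^ 2 ≠ 0)
    (hR : bubbleQuadric D l x₀ p ≠ 0) :
    lap (diskBubble D l x₀) p = 2 / bubbleQuadric D l x₀ p ^ 2 := by
  rw [(diskBubble_eventuallyEq hl hd).lap_eq, lap_const_mul]
  unfold bubbleQuadric at hR ⊢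
  rw [lap_log_quadric _ _ _ hR]
  simp only [EuclideanSpace.real_norm_sq_eq, Fin.sum_univ_two, Matrix.cons_val_zero,
    Matrix.cons_val_one, Matrix.cons_val_fin_one]
  field_simp
  ring

theorem fderiv_diskBubble_apply_self (hl : l ≠ 0) (hp : ‖p‖ = 1)
    (hd : p 0 ^ 2 + (p 1 + 1) ^ 2 ≠ 0) (hR : bubbleQuadric D l x₀ p ≠ 0) :
    fderiv ℝ (diskBubble D l x₀) p p = 2 * D / bubbleQuadric D l x₀ p - 2 := by
  rw [(diskBubble_eventuallyEq hl hd).fderiv_eq, fderiv_fun_const_mul, Pi.smul_apply,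
    smul_apply, smul_eq_mul]
  unfold bubbleQuadric at hR ⊢
  rw [fderiv_log_quadric_apply_self_of_norm_eq_one _ _ _ hR hp]
  field_simp
  ring

end Bubble

/-- For `D > 1`, `λ > 0`, `x₀ ∈ ℝ`, the disk bubble solves `-ΔÛ = -2 e^Û` in the open
unit disk and `∂_ν Û + 2 = 2D e^{Û/2}` on the unit circle (away from the singular
point of the parametrizing formula), `∂_ν` being the outer normal derivative. -/
theorem diskBubble_solves (D l x₀ : ℝ) (hD : 1 < D) (hl : 0 < l) :
    (∀ p : EuclideanSpace ℝ (Fin 2), ‖p‖ < 1 →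
      -(lap (diskBubble D l x₀) p) = -2 * Real.exp (diskBubble D l x₀ p)) ∧
    (∀ p : EuclideanSpace ℝ (Fin 2), ‖p‖ = 1 → p 0 ^ 2 + (p 1 + 1) ^ 2 ≠ 0 →
      fderiv ℝ (diskBubble D l x₀) p p + 2 =
        2 * D * Real.exp (diskBubble D l x₀ p / 2)) := by
  refine ⟨fun p hp => ?_, fun p hp hd => ?_⟩
  · have hd := sq_add_add_one_sq_pos hp
    have hR := bubbleQuadric_pos (x₀ := x₀) hD hl hp.le hd
    rw [lap_diskBubble hl.ne' hd.ne' hR.ne', exp_diskBubble hl.ne' hd.ne' hR]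
    ring
  · have hR := bubbleQuadric_pos (x₀ := x₀) hD hl hp.le ((by positivity : (0 : ℝ) ≤ _).lt_of_ne' hd)
    rw [fderiv_diskBubble_apply_self hl.ne' hp hd hR.ne', exp_half_diskBubble hl.ne' hd hR]
    ring
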